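/- Iterated tame estimate at level s: With C₀ = K₀ + K₁(α₀) and s ≥ α₀, for any n ≥ 1 and matrices X₁, …, Xₙ with finite ‖·‖_s norms, ‖∏_{i=1}^n X_i‖_s ≤ n C₀^n K₁(s) Σ_{i=1}^n (∏_{j≠i} ‖X_j‖_{α₀}) ‖X_i‖_s. -/

import Mathlib

open scoped BigOperators

noncomputable section

abbrev Mat (d : ℕ) := (Fin d → ℤ) → (Fin d → ℤ) → ℝ

/-- `|k|_∞` as a real number. -/
def absInf {d : ℕ} (k : Fin d → ℤ) : ℝ :=
  ((Finset.univ.sup fun v => (k v).natAbs : ℕ) : ℝ)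

/-- `⟨k⟩ = max (1, |k|_∞)`. -/
def jp {d : ℕ} (k : Fin d → ℤ) : ℝ := max 1 (absInf k)

/-- sup-norm of the `k`-diagonal of a matrix. -/
def diagNorm {d : ℕ} (A : Mat d) (k : Fin d → ℤ) : ℝ := ⨆ i, |A i (i - k)|

/-- Sobolev norm `‖A‖_s`. -/
def SNorm {d : ℕ} (s : ℝ) (A : Mat d) : ℝ :=
  Real.sqrt (∑' k : Fin d → ℤ, (diagNorm A k) ^ 2 * (jp k) ^ (2 * s))

/-- `A` has finite `‖·‖_s` norm. -/
def MemS {d : ℕ} (s : ℝ) (A : Mat d) : Prop :=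
  (∀ k : Fin d → ℤ, BddAbove (Set.range fun i => |A i (i - k)|)) ∧
  Summable (fun k : Fin d → ℤ => (diagNorm A k) ^ 2 * (jp k) ^ (2 * s))

def K0 (d : ℕ) (α₀ : ℝ) : ℝ :=
  Real.sqrt (20 * ∑' k : Fin d → ℤ, (jp k) ^ (-(2 * α₀)))

def K1 (d : ℕ) (α₀ s : ℝ) : ℝ :=
  (1 - (10:ℝ) ^ (-(1 / (2 * s)))) ^ (-s) *
    Real.sqrt (2 * ∑' k : Fin d → ℤ, (jp k) ^ (-(2 * α₀)))

def C0 (d : ℕ) (α₀ : ℝ) : ℝ := K0 d α₀ + K1 d α₀ α₀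

def matMul {d : ℕ} (X Y : Mat d) : Mat d := fun i j => ∑' l : Fin d → ℤ, X i l * Y l j

def idMat {d : ℕ} : Mat d := fun i j => if i = j then 1 else 0

def powMat {d : ℕ} (X : Mat d) : ℕ → Mat d
  | 0 => idMat
  | n + 1 => matMul X (powMat X n)

def prodList {d : ℕ} (l : List (Mat d)) : Mat d := l.foldr matMul idMat

/-- Cauchy–Schwarz for tsums of nonneg functions. -/
theorem tsum_CS {ι : Type*} {f g : ι → ℝ} (hf0 : ∀ i, 0 ≤ f i) (hg0 : ∀ i, 0 ≤ g i)
    (hf : Summable (fun i => f i ^ 2)) (hg : Summable (fun i => g i ^ 2)) :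
    Summable (fun i => f i * g i) ∧
      (∑' i, f i * g i) ≤ Real.sqrt (∑' i, f i ^ 2) * Real.sqrt (∑' i, g i ^ 2) := by
  have hsum : Summable (fun i => f i * g i) := by
    apply Summable.of_nonneg_of_le (fun i => mul_nonneg (hf0 i) (hg0 i))
      (fun i => ?_) ((hf.add hg).div_const 2)
    have := sq_nonneg (f i - g i)
    nlinarith
  refine ⟨hsum, Summable.tsum_le_of_sum_le hsum fun s => ?_⟩
  have h1 : (∑ i ∈ s, f i * g i) ^ 2 ≤ (∑ i ∈ s, f i ^ 2) * ∑ i ∈ s, g i ^ 2 :=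
    Finset.sum_mul_sq_le_sq_mul_sq s f g
  have h2 : (∑ i ∈ s, f i ^ 2) ≤ ∑' i, f i ^ 2 := Summable.sum_le_tsum s (fun i _ => sq_nonneg _) hf
  have h3 : (∑ i ∈ s, g i ^ 2) ≤ ∑' i, g i ^ 2 := Summable.sum_le_tsum s (fun i _ => sq_nonneg _) hg
  have h4 : 0 ≤ ∑ i ∈ s, f i * g i := Finset.sum_nonneg fun i _ => mul_nonneg (hf0 i) (hg0 i)
  have := Real.sqrt_le_sqrt (h1.trans (mul_le_mul h2 h3 (Finset.sum_nonneg fun i _ => sq_nonneg _)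
    (tsum_nonneg (fun i : ι => sq_nonneg (f i)))))
  rwa [Real.sqrt_sq h4, Real.sqrt_mul (tsum_nonneg (fun i : ι => sq_nonneg (f i)))] at this

/-- Minkowski (ℓ² triangle) for tsums of nonneg functions. -/
theorem tsum_minkowski {ι : Type*} {f g : ι → ℝ} (hf0 : ∀ i, 0 ≤ f i) (hg0 : ∀ i, 0 ≤ g i)
    (hf : Summable (fun i => f i ^ 2)) (hg : Summable (fun i => g i ^ 2)) :
    Summable (fun i => (f i + g i) ^ 2) ∧
      Real.sqrt (∑' i, (f i + g i) ^ 2) ≤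
        Real.sqrt (∑' i, f i ^ 2) + Real.sqrt (∑' i, g i ^ 2) := by
  obtain ⟨hfg, hCS⟩ := tsum_CS hf0 hg0 hf hg
  have hexp : ∀ i, (f i + g i) ^ 2 = f i ^ 2 + 2 * (f i * g i) + g i ^ 2 := fun i => by ring
  have hsum : Summable (fun i => (f i + g i) ^ 2) := by
    simp_rw [hexp]; exact (hf.add ((hfg.mul_left 2))).add hg
  refine ⟨hsum, ?_⟩
  have ht : (∑' i, (f i + g i) ^ 2) ≤
      (Real.sqrt (∑' i, f i ^ 2) + Real.sqrt (∑' i, g i ^ 2)) ^ 2 := by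
    have : (∑' i, (f i + g i) ^ 2) = (∑' i, f i ^ 2) + 2 * (∑' i, f i * g i)
        + (∑' i, g i ^ 2) := by
      simp_rw [hexp]
      rw [Summable.tsum_add (hf.add (hfg.mul_left 2)) hg, Summable.tsum_add hf (hfg.mul_left 2), tsum_mul_left]
    rw [this]
    have e1 : Real.sqrt (∑' i, f i ^ 2) ^ 2 = ∑' i, f i ^ 2 :=
      Real.sq_sqrt (tsum_nonneg (fun i : ι => sq_nonneg (f i)))
    have e2 : Real.sqrt (∑' i, g i ^ 2) ^ 2 = ∑' i, g i ^ 2 :=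
      Real.sq_sqrt (tsum_nonneg (fun i : ι => sq_nonneg (g i)))
    nlinarith [hCS]
  calc Real.sqrt (∑' i, (f i + g i) ^ 2) ≤
      Real.sqrt ((Real.sqrt (∑' i, f i ^ 2) + Real.sqrt (∑' i, g i ^ 2)) ^ 2) :=
        Real.sqrt_le_sqrt ht
    _ = _ := Real.sqrt_sq (by positivity)

lemma jp_one_le {d : ℕ} (k : Fin d → ℤ) : 1 ≤ jp k := le_max_left _ _
lemma jp_pos {d : ℕ} (k : Fin d → ℤ) : 0 < jp k := lt_of_lt_of_le one_pos (jp_one_le k)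
lemma absInf_nonneg {d : ℕ} (k : Fin d → ℤ) : 0 ≤ absInf k := Nat.cast_nonneg _

lemma coord_le_absInf {d : ℕ} (k : Fin d → ℤ) (v : Fin d) : |(k v : ℝ)| ≤ absInf k := by
  have h : (k v).natAbs ≤ (Finset.univ.sup fun v => (k v).natAbs) :=
    Finset.le_sup (f := fun v => (k v).natAbs) (Finset.mem_univ v)
  calc |(k v : ℝ)| = ((k v).natAbs : ℝ) := by
        rw [← Int.cast_abs, Int.abs_eq_natAbs, Int.cast_natCast]
    _ ≤ absInf k := by rw [absInf]; exact_mod_cast h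

lemma coordmax_le_jp {d : ℕ} (k : Fin d → ℤ) (v : Fin d) : max 1 |(k v : ℝ)| ≤ jp k :=
  max_le (jp_one_le k) (le_trans (coord_le_absInf k v) (le_max_right _ _))

/-- 1-dim zeta summability. -/
lemma summable_one_dim {q : ℝ} (hq : 1 < q) :
    Summable (fun m : ℤ => (max 1 |(m : ℝ)|) ^ (-q)) := by
  have hg : Summable (fun m : ℤ => 1 / |(m : ℝ)| ^ q) := by
    have := (Real.summable_one_div_int_add_rpow 0 q).mpr hq
    simpa using this
  have hδ : Summable (fun m : ℤ => if m = 0 then (1:ℝ) else 0) :=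
    summable_of_ne_finset_zero (s := {0}) (by intro i hi; simp at hi; simp [hi])
  have : (fun m : ℤ => (max 1 |(m : ℝ)|) ^ (-q)) =
      fun m : ℤ => 1 / |(m : ℝ)| ^ q + (if m = 0 then (1:ℝ) else 0) := by
    funext m
    by_cases h : m = 0
    · subst h
      simp [Real.zero_rpow (by linarith : q ≠ 0)]
    · have h1 : (1:ℝ) ≤ |(m : ℝ)| := by
        rw [← Int.cast_abs]; exact_mod_cast Int.one_le_abs (by simpa using h)
      rw [max_eq_right h1, if_neg h, add_zero, Real.rpow_neg (by linarith), one_div]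
  rw [this]
  exact hg.add hδ

/-- Pi-type product summability. -/
lemma summable_pi_prod : ∀ (d : ℕ) {q : ℝ}, 1 < q →
    Summable (fun k : Fin d → ℤ => ∏ v, (max 1 |(k v : ℝ)|) ^ (-q)) := by
  intro d
  induction d with
  | zero => intro q hq; simp; exact Summable.of_finite
  | succ n ih =>
    intro q hq
    rw [← (Fin.consEquiv (fun _ : Fin (n+1) => ℤ)).summable_iff]
    have : ((fun k : Fin (n+1) → ℤ => ∏ v, (max 1 |(k v : ℝ)|) ^ (-q)) ∘
        (Fin.consEquiv (fun _ : Fin (n+1) => ℤ))) =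
        fun p : ℤ × (Fin n → ℤ) =>
          ((max 1 |(p.1 : ℝ)|) ^ (-q)) * ∏ v, (max 1 |(p.2 v : ℝ)|) ^ (-q) := by
      funext p
      simp only [Function.comp_apply, Fin.consEquiv_apply, Fin.prod_univ_succ,
        Fin.cons_zero, Fin.cons_succ]
    rw [this]
    exact Summable.mul_of_nonneg (f := fun m : ℤ => (max 1 |(m : ℝ)|) ^ (-q))
      (g := fun k : Fin n → ℤ => ∏ v, (max 1 |(k v : ℝ)|) ^ (-q))
      (summable_one_dim hq) (ih hq)
      (fun m => Real.rpow_nonneg (le_max_of_le_left zero_le_one) _)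
      (fun k => Finset.prod_nonneg fun v _ => Real.rpow_nonneg (le_max_of_le_left zero_le_one) _)

/-- Zeta summability on the lattice. -/
lemma summable_jp_rpow {d : ℕ} {p : ℝ} (hp : (d : ℝ) < p) :
    Summable (fun k : Fin d → ℤ => jp k ^ (-p)) := by
  rcases Nat.eq_zero_or_pos d with hd | hd
  · subst hd; exact Summable.of_finite
  set q : ℝ := p / d with hqdef
  have hd' : (0:ℝ) < d := by exact_mod_cast hd
  have hq : 1 < q := (one_lt_div hd').mpr hp
  apply Summable.of_nonneg_of_le (fun k => Real.rpow_nonneg (jp_pos k).le _)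
    (fun k => ?_) (summable_pi_prod d hq)
  -- jp k ^ (-p) ≤ ∏ v, (max 1 |k v|) ^ (-q)
  have h1 : ∀ v : Fin d, (0:ℝ) < max 1 |(k v : ℝ)| := fun v => lt_max_of_lt_left one_pos
  have hprod_le : (∏ v, max 1 |(k v : ℝ)|) ≤ jp k ^ (d : ℕ) := by
    calc (∏ v, max 1 |(k v : ℝ)|) ≤ ∏ _v : Fin d, jp k :=
          Finset.prod_le_prod (fun v _ => (h1 v).le) (fun v _ => coordmax_le_jp k v)
      _ = jp k ^ (d : ℕ) := by rw [Finset.prod_const, Finset.card_univ, Fintype.card_fin]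
  have hprod_pos : (0:ℝ) < ∏ v, max 1 |(k v : ℝ)| := Finset.prod_pos fun v _ => h1 v
  have h2 : (∏ v, max 1 |(k v : ℝ)|) ^ q ≤ jp k ^ p := by
    calc (∏ v, max 1 |(k v : ℝ)|) ^ q ≤ (jp k ^ (d : ℕ)) ^ q :=
          Real.rpow_le_rpow hprod_pos.le hprod_le (by positivity)
      _ = jp k ^ ((d : ℝ) * q) := by
          rw [← Real.rpow_natCast (jp k) d, ← Real.rpow_mul (jp_pos k).le]
      _ = jp k ^ p := by rw [hqdef]; congr 1; field_simp
  calc jp k ^ (-p) = (jp k ^ p)⁻¹ := Real.rpow_neg (jp_pos k).le p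
    _ ≤ ((∏ v, max 1 |(k v : ℝ)|) ^ q)⁻¹ := by
        apply inv_anti₀ (Real.rpow_pos_of_pos hprod_pos q) h2
    _ = ∏ v, (max 1 |(k v : ℝ)|) ^ (-q) := by
        rw [← Real.rpow_neg hprod_pos.le, ← Real.finset_prod_rpow _ _ (fun v _ => (h1 v).le)]

lemma rpow_sq {x : ℝ} (hx : 0 < x) (t : ℝ) : (x ^ t) ^ 2 = x ^ (2 * t) := by
  rw [sq, ← Real.rpow_add hx]; ring_nf

lemma diagNorm_nonneg {d : ℕ} (A : Mat d) (k : Fin d → ℤ) : 0 ≤ diagNorm A k :=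
  Real.iSup_nonneg fun i => abs_nonneg _

lemma sq_weight_eq {d : ℕ} (A : Mat d) (t : ℝ) (k : Fin d → ℤ) :
    (diagNorm A k) ^ 2 * (jp k) ^ (2 * t) = (diagNorm A k * jp k ^ t) ^ 2 := by
  rw [mul_pow, rpow_sq (jp_pos k)]

lemma snorm_eq {d : ℕ} (A : Mat d) (t : ℝ) :
    SNorm t A = Real.sqrt (∑' k, (diagNorm A k * jp k ^ t) ^ 2) := by
  rw [SNorm]; congr 1; exact tsum_congr fun k => sq_weight_eq A t k

lemma snorm_nonneg {d : ℕ} (A : Mat d) (t : ℝ) : 0 ≤ SNorm t A := Real.sqrt_nonneg _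

lemma memS_summable_sq {d : ℕ} {A : Mat d} {t : ℝ} (h : MemS t A) :
    Summable (fun k => (diagNorm A k * jp k ^ t) ^ 2) := by
  refine h.2.congr fun k => sq_weight_eq A t k

/-- Monotonicity in `s`. -/
lemma memS_mono {d : ℕ} {A : Mat d} {t u : ℝ} (htu : t ≤ u) (h : MemS u A) :
    MemS t A := by
  refine ⟨h.1, Summable.of_nonneg_of_le (fun k => mul_nonneg (sq_nonneg _) (Real.rpow_nonneg (jp_pos k).le _)) (fun k => ?_) h.2⟩
  apply mul_le_mul_of_nonneg_left _ (sq_nonneg _)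
  exact Real.rpow_le_rpow_of_exponent_le (jp_one_le k) (by linarith)

lemma snorm_mono {d : ℕ} {A : Mat d} {t u : ℝ} (htu : t ≤ u) (h : MemS u A) :
    SNorm t A ≤ SNorm u A := by
  apply Real.sqrt_le_sqrt
  apply Summable.tsum_le_tsum _ (memS_mono htu h).2 h.2
  intro k
  apply mul_le_mul_of_nonneg_left _ (sq_nonneg _)
  exact Real.rpow_le_rpow_of_exponent_le (jp_one_le k) (by linarith)

lemma snorm_term_le {d : ℕ} {A : Mat d} {t : ℝ} (h : MemS t A) (k : Fin d → ℤ) :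
    diagNorm A k * jp k ^ t ≤ SNorm t A := by
  rw [snorm_eq]
  have h1 : (diagNorm A k * jp k ^ t) ^ 2 ≤ ∑' k', (diagNorm A k' * jp k' ^ t) ^ 2 :=
    Summable.le_tsum (memS_summable_sq h) k (fun k' _ => sq_nonneg _)
  have h0 : 0 ≤ diagNorm A k * jp k ^ t := mul_nonneg (diagNorm_nonneg A k) (Real.rpow_nonneg (jp_pos k).le _)
  calc diagNorm A k * jp k ^ t = Real.sqrt ((diagNorm A k * jp k ^ t) ^ 2) :=
        (Real.sqrt_sq h0).symm
    _ ≤ _ := Real.sqrt_le_sqrt h1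

/-- ℓ¹ bound on the diagonal norms. -/
lemma l1_bound {d : ℕ} {A : Mat d} {t : ℝ} (h : MemS t A)
    (hw : Summable (fun k : Fin d → ℤ => jp k ^ (-(2 * t)))) :
    Summable (diagNorm A) ∧
      (∑' k, diagNorm A k) ≤
        Real.sqrt (∑' k : Fin d → ℤ, jp k ^ (-(2 * t))) * SNorm t A := by
  have hf : Summable (fun k : Fin d → ℤ => (jp k ^ (-t)) ^ 2) := by
    refine hw.congr fun k => ?_
    rw [rpow_sq (jp_pos k)]; ring_nf
  have hg : Summable (fun k => (diagNorm A k * jp k ^ t) ^ 2) := memS_summable_sq h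
  obtain ⟨hs, hb⟩ := tsum_CS (f := fun k : Fin d → ℤ => jp k ^ (-t))
    (g := fun k => diagNorm A k * jp k ^ t)
    (fun k => Real.rpow_nonneg (jp_pos k).le _) (fun k => mul_nonneg (diagNorm_nonneg A k) (Real.rpow_nonneg (jp_pos k).le _)) hf hg
  have key : ∀ k : Fin d → ℤ, jp k ^ (-t) * (diagNorm A k * jp k ^ t) = diagNorm A k := by
    intro k
    rw [mul_comm (diagNorm A k), ← mul_assoc, ← Real.rpow_add (jp_pos k), neg_add_cancel,
      Real.rpow_zero, one_mul]
  constructor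
  · exact hs.congr key
  · calc (∑' k, diagNorm A k) = ∑' k, jp k ^ (-t) * (diagNorm A k * jp k ^ t) :=
        (tsum_congr key).symm
      _ ≤ Real.sqrt (∑' k : Fin d → ℤ, (jp k ^ (-t)) ^ 2) *
          Real.sqrt (∑' k, (diagNorm A k * jp k ^ t) ^ 2) := hb
      _ = Real.sqrt (∑' k : Fin d → ℤ, jp k ^ (-(2 * t))) * SNorm t A := by
          rw [snorm_eq]
          congr 2
          exact tsum_congr fun k => by rw [rpow_sq (jp_pos k)]; ring_nf

section Young
variable {ι : Type*} [AddCommGroup ι]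

lemma summable_translate {f : ι → ℝ} (hf : Summable f) (k : ι) :
    Summable (fun k' => f (k - k')) := by
  have := (Equiv.subLeft k).summable_iff (f := f)
  exact this.mpr hf

lemma tsum_translate (f : ι → ℝ) (k : ι) : (∑' k', f (k - k')) = ∑' j, f j :=
  Equiv.tsum_eq (Equiv.subLeft k) f

lemma summable_translate' {f : ι → ℝ} (hf : Summable f) (k : ι) :
    Summable (fun k' => f (k' - k)) := by
  have := (Equiv.subRight k).summable_iff (f := f)
  exact this.mpr hf

lemma tsum_translate' (f : ι → ℝ) (k : ι) : (∑' k', f (k' - k)) = ∑' j, f j :=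
  Equiv.tsum_eq (Equiv.subRight k) f

set_option maxHeartbeats 1000000 in
/-- Young's inequality `‖g ⋆ f‖_{ℓ²} ≤ ‖g‖_{ℓ²} ‖f‖_{ℓ¹}` for nonnegative functions. -/
lemma young {f g : ι → ℝ} (hf0 : ∀ i, 0 ≤ f i) (hg0 : ∀ i, 0 ≤ g i)
    (hf : Summable f) (hg : Summable (fun i => g i ^ 2)) :
    Summable (fun k => (∑' k', g k' * f (k - k')) ^ 2) ∧
      Real.sqrt (∑' k, (∑' k', g k' * f (k - k')) ^ 2) ≤
        Real.sqrt (∑' i, g i ^ 2) * ∑' i, f i := by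
  set F : ℝ := ∑' i, f i with hF
  have hF0 : 0 ≤ F := tsum_nonneg hf0
  have hfbd : ∀ j, f j ≤ F := fun j => Summable.le_tsum hf j (fun j' _ => hf0 j')
  set h : ι → ℝ := fun k => ∑' k', g k' * f (k - k') with hh
  set m : ι → ℝ := fun k => ∑' k', g k' ^ 2 * f (k - k') with hm
  have hm_sumd : ∀ k, Summable (fun k' => g k' ^ 2 * f (k - k')) := fun k => by
    apply Summable.of_nonneg_of_le (fun k' => mul_nonneg (sq_nonneg _) (hf0 _))
      (fun k' => mul_le_mul_of_nonneg_left (hfbd _) (sq_nonneg _)) (hg.mul_right F)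
  have hm0 : ∀ k, 0 ≤ m k := fun k => tsum_nonneg fun k' => mul_nonneg (sq_nonneg _) (hf0 _)
  -- pointwise Cauchy-Schwarz: h k ^ 2 ≤ m k * F
  have hpoint : ∀ k, h k ^ 2 ≤ m k * F := by
    intro k
    have hp2 : Summable (fun k' => (g k' * Real.sqrt (f (k - k'))) ^ 2) := by
      refine (hm_sumd k).congr fun k' => ?_
      rw [mul_pow, Real.sq_sqrt (hf0 _)]
    have hq2 : Summable (fun k' => (Real.sqrt (f (k - k'))) ^ 2) := by
      refine ((summable_translate hf k)).congr fun k' => (Real.sq_sqrt (hf0 _)).symm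
    obtain ⟨_, hcs⟩ := tsum_CS (f := fun k' => g k' * Real.sqrt (f (k - k')))
      (g := fun k' => Real.sqrt (f (k - k')))
      (fun k' => mul_nonneg (hg0 _) (Real.sqrt_nonneg _)) (fun k' => Real.sqrt_nonneg _)
      hp2 hq2
    have e1 : ∀ k', (g k' * Real.sqrt (f (k - k'))) * Real.sqrt (f (k - k')) =
        g k' * f (k - k') := fun k' => by
      rw [mul_assoc, Real.mul_self_sqrt (hf0 _)]
    have e2 : (∑' k', (g k' * Real.sqrt (f (k - k'))) ^ 2) = m k :=
      tsum_congr fun k' => by rw [mul_pow, Real.sq_sqrt (hf0 _)]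
    have e3 : (∑' k', (Real.sqrt (f (k - k'))) ^ 2) = F := by
      rw [hF, ← tsum_translate f k]
      exact tsum_congr fun k' => Real.sq_sqrt (hf0 _)
    have hb : h k ≤ Real.sqrt (m k) * Real.sqrt F := by
      rw [hh]
      calc (∑' k', g k' * f (k - k')) = ∑' k', (g k' * Real.sqrt (f (k - k'))) *
            Real.sqrt (f (k - k')) := (tsum_congr e1).symm
        _ ≤ _ := by rw [← e2, ← e3] at *; exact hcs
    have h0 : 0 ≤ h k := tsum_nonneg fun k' => mul_nonneg (hg0 _) (hf0 _)
    calc h k ^ 2 ≤ (Real.sqrt (m k) * Real.sqrt F) ^ 2 := by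
          exact pow_le_pow_left₀ h0 hb 2
      _ = m k * F := by
          rw [mul_pow, Real.sq_sqrt (hm0 k), Real.sq_sqrt hF0]
  -- Fubini: m is summable with sum (∑ g²) * F
  have hG : Summable (fun p : ι × ι => g p.1 ^ 2 * f (p.2 - p.1)) := by
    apply (summable_prod_of_nonneg (fun p => mul_nonneg (sq_nonneg _) (hf0 _))).mpr
    constructor
    · intro k'
      exact ((summable_translate' hf k').mul_left (g k' ^ 2)).congr fun k => rfl
    · apply Summable.congr (hg.mul_right F)
      intro k'
      show g k' ^ 2 * F = ∑' k, g k' ^ 2 * f (k - k')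
      rw [tsum_mul_left, tsum_translate' f k']
  have hGswap : Summable (fun p : ι × ι => g p.2 ^ 2 * f (p.1 - p.2)) := by
    have h1 := hG.prod_symm
    exact h1.congr fun p => rfl
  have hm_sum : Summable m := hGswap.prod.congr fun k => rfl
  have hm_tsum : (∑' k, m k) = (∑' i, g i ^ 2) * F := by
    have h1 : (∑' k, m k) = ∑' p : ι × ι, g p.2 ^ 2 * f (p.1 - p.2) := by
      rw [Summable.tsum_prod hGswap]
    have h2 : (∑' p : ι × ι, g p.2 ^ 2 * f (p.1 - p.2)) =
        ∑' p : ι × ι, g p.1 ^ 2 * f (p.2 - p.1) := by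
      rw [← Equiv.tsum_eq (Equiv.prodComm ι ι) (fun p : ι × ι => g p.1 ^ 2 * f (p.2 - p.1))]
      rfl
    rw [h1, h2, Summable.tsum_prod hG]
    calc (∑' k', ∑' k, g k' ^ 2 * f (k - k')) = ∑' k', g k' ^ 2 * F := by
          apply tsum_congr; intro k'; rw [tsum_mul_left, tsum_translate' f k']
      _ = (∑' i, g i ^ 2) * F := tsum_mul_right
  -- conclude
  have hh2_sum : Summable (fun k => h k ^ 2) :=
    Summable.of_nonneg_of_le (fun k => sq_nonneg _) hpoint (hm_sum.mul_right F)
  refine ⟨hh2_sum, ?_⟩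
  have hb : (∑' k, h k ^ 2) ≤ (∑' i, g i ^ 2) * F * F := by
    calc (∑' k, h k ^ 2) ≤ ∑' k, m k * F :=
          Summable.tsum_le_tsum hpoint hh2_sum (hm_sum.mul_right F)
      _ = (∑' k, m k) * F := tsum_mul_right
      _ = (∑' i, g i ^ 2) * F * F := by rw [hm_tsum]
  calc Real.sqrt (∑' k, h k ^ 2) ≤ Real.sqrt ((∑' i, g i ^ 2) * F * F) := Real.sqrt_le_sqrt hb
    _ = Real.sqrt (∑' i, g i ^ 2) * F := by
        rw [mul_assoc, Real.sqrt_mul (tsum_nonneg fun i => sq_nonneg (g i)),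
          Real.sqrt_mul_self hF0]

end Young

lemma absInf_triangle {d : ℕ} (x y : Fin d → ℤ) : absInf (x + y) ≤ absInf x + absInf y := by
  have h : (Finset.univ.sup fun v => ((x + y) v).natAbs) ≤
      (Finset.univ.sup fun v => (x v).natAbs) + (Finset.univ.sup fun v => (y v).natAbs) := by
    apply Finset.sup_le
    intro v _
    calc ((x + y) v).natAbs = (x v + y v).natAbs := rfl
      _ ≤ (x v).natAbs + (y v).natAbs := Int.natAbs_add_le _ _
      _ ≤ _ := add_le_add (Finset.le_sup (f := fun v => (x v).natAbs) (Finset.mem_univ v))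
          (Finset.le_sup (f := fun v => (y v).natAbs) (Finset.mem_univ v))
  unfold absInf
  exact_mod_cast h

lemma jp_sub_lower {d : ℕ} {θ : ℝ} (hθ : θ < 1) {k k' : Fin d → ℤ}
    (h : jp k' < θ * jp k) : (1 - θ) * jp k ≤ jp (k - k') := by
  have h1 : (1:ℝ) < θ * jp k := lt_of_le_of_lt (jp_one_le k') h
  have hjk : 1 < jp k := by nlinarith [jp_pos k]
  have hjk_eq : jp k = absInf k := by
    have h1a : 1 ≤ absInf k := by
      by_contra hc
      push_neg at hc
      rw [jp, max_eq_left hc.le] at hjk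
      exact lt_irrefl 1 hjk
    exact max_eq_right h1a
  have htri : absInf k ≤ absInf (k - k') + absInf k' := by
    have := absInf_triangle (k - k') k'
    simpa using this
  have h2 : absInf k' ≤ jp k' := le_max_right _ _
  have h3 : (1 - θ) * jp k ≤ absInf (k - k') := by nlinarith [h, h2, htri, hjk_eq.le, hjk_eq.ge]
  exact le_trans h3 (le_max_right _ _)

lemma one_le_jp_rpow {d : ℕ} (k : Fin d → ℤ) {t : ℝ} (ht : 0 ≤ t) : 1 ≤ jp k ^ t :=
  Real.one_le_rpow (jp_one_le k) ht

lemma memS_diag_sq_summable {d : ℕ} {A : Mat d} {t : ℝ} (h : MemS t A) (ht : 0 ≤ t) :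
    Summable (fun k => (diagNorm A k) ^ 2) := by
  apply Summable.of_nonneg_of_le (fun k => sq_nonneg _) (fun k => ?_) (memS_summable_sq h)
  have h1 : 1 ≤ jp k ^ t := one_le_jp_rpow k ht
  have h0 : 0 ≤ diagNorm A k := diagNorm_nonneg A k
  calc diagNorm A k ^ 2 = (diagNorm A k * 1) ^ 2 := by ring
    _ ≤ (diagNorm A k * jp k ^ t) ^ 2 := by
        apply pow_le_pow_left₀ (by positivity)
        exact mul_le_mul_of_nonneg_left h1 h0

set_option maxHeartbeats 1600000 in
/-- The tame product estimate. -/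
lemma tame {d : ℕ} {α₀ s : ℝ} (hα : (d : ℝ) / 2 < α₀) (hs : α₀ ≤ s) {A B : Mat d}
    (hA : MemS s A) (hB : MemS s B) :
    MemS s (matMul A B) ∧
      SNorm s (matMul A B) ≤
        K1 d α₀ s * SNorm s A * SNorm α₀ B + K0 d α₀ * SNorm α₀ A * SNorm s B := by
  have hα0 : 0 < α₀ := lt_of_le_of_lt (by positivity) hα
  have hs0 : 0 < s := lt_of_lt_of_le hα0 hs
  set θ : ℝ := (10:ℝ) ^ (-(1 / (2 * s))) with hθdef
  have hθpos : 0 < θ := Real.rpow_pos_of_pos (by norm_num) _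
  have hθlt : θ < 1 := by
    apply Real.rpow_lt_one_of_one_lt_of_neg (by norm_num)
    rw [neg_lt, neg_zero]
    positivity
  have h1θ : 0 < 1 - θ := by linarith
  set a : (Fin d → ℤ) → ℝ := diagNorm A with ha
  set b : (Fin d → ℤ) → ℝ := diagNorm B with hb
  have ha0 : ∀ k, 0 ≤ a k := diagNorm_nonneg A
  have hb0 : ∀ k, 0 ≤ b k := diagNorm_nonneg B
  have hw : Summable (fun k : Fin d → ℤ => jp k ^ (-(2 * α₀))) :=
    summable_jp_rpow (by linarith)
  set Sw : ℝ := ∑' k : Fin d → ℤ, jp k ^ (-(2 * α₀)) with hSw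
  have hSw0 : 0 ≤ Sw := tsum_nonneg fun k => Real.rpow_nonneg (jp_pos k).le _
  have hAα : MemS α₀ A := memS_mono hs hA
  have hBα : MemS α₀ B := memS_mono hs hB
  have hAs2 : Summable (fun k => (a k * jp k ^ s) ^ 2) := memS_summable_sq hA
  have hBs2 : Summable (fun k => (b k * jp k ^ s) ^ 2) := memS_summable_sq hB
  have ha2 : Summable (fun k => a k ^ 2) := memS_diag_sq_summable hA hs0.le
  have hb2 : Summable (fun k => b k ^ 2) := memS_diag_sq_summable hB hs0.le
  obtain ⟨ha1, ha1b⟩ := l1_bound hAα hw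
  obtain ⟨hb1, hb1b⟩ := l1_bound hBα hw
  -- the convolution bound
  set c : (Fin d → ℤ) → ℝ := fun k => ∑' k', a k' * b (k - k') with hc
  have hc_sumd : ∀ k, Summable (fun k' => a k' * b (k - k')) := by
    intro k
    have htr : Summable (fun k' => (b (k - k')) ^ 2) :=
      summable_translate (f := fun j => b j ^ 2) hb2 k
    exact (tsum_CS ha0 (fun k' => hb0 _) ha2 htr).1
  have hc0 : ∀ k, 0 ≤ c k := fun k => tsum_nonneg fun k' => mul_nonneg (ha0 _) (hb0 _)
  -- entrywise bound
  have hterm : ∀ (k i : Fin d → ℤ), ∀ k',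
      |A i (i - k') * B (i - k') (i - k)| ≤ a k' * b (k - k') := by
    intro k i k'
    rw [abs_mul]
    apply mul_le_mul _ _ (abs_nonneg _) (ha0 k')
    · exact le_ciSup (hA.1 k') i
    · have hidx : i - k = (i - k') - (k - k') := by abel
      rw [hidx]
      exact le_ciSup (hB.1 (k - k')) (i - k')
  have hentry : ∀ (k i : Fin d → ℤ), |matMul A B i (i - k)| ≤ c k := by
    intro k i
    have hsum_abs : Summable (fun k' => |A i (i - k') * B (i - k') (i - k)|) :=
      Summable.of_nonneg_of_le (fun k' => abs_nonneg _) (hterm k i) (hc_sumd k)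
    have hsum : Summable (fun k' => A i (i - k') * B (i - k') (i - k)) := hsum_abs.of_abs
    have hrw : matMul A B i (i - k) = ∑' k', A i (i - k') * B (i - k') (i - k) := by
      rw [matMul]
      exact (Equiv.tsum_eq (Equiv.subLeft i) (fun l => A i l * B l (i - k))).symm
    rw [hrw]
    calc |∑' k', A i (i - k') * B (i - k') (i - k)|
        ≤ ∑' k', |A i (i - k') * B (i - k') (i - k)| := by
          have hn := norm_tsum_le_tsum_norm (f := fun k' => A i (i - k') * B (i - k') (i - k))
            (hsum_abs.congr fun k' => (Real.norm_eq_abs _).symm)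
          simp only [Real.norm_eq_abs] at hn
          exact hn
      _ ≤ c k := Summable.tsum_le_tsum (hterm k i) hsum_abs (hc_sumd k)
  have hBdd : ∀ k, BddAbove (Set.range fun i => |matMul A B i (i - k)|) := by
    intro k
    refine ⟨c k, ?_⟩
    rintro x ⟨i, rfl⟩
    exact hentry k i
  have hdiag_le : ∀ k, diagNorm (matMul A B) k ≤ c k := by
    intro k
    exact ciSup_le fun i => hentry k i
  -- weighted splitting
  set As : (Fin d → ℤ) → ℝ := fun k => a k * jp k ^ s with hAs
  set Bs : (Fin d → ℤ) → ℝ := fun k => b k * jp k ^ s with hBs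
  have hAs0 : ∀ k, 0 ≤ As k := fun k => mul_nonneg (ha0 k) (Real.rpow_nonneg (jp_pos k).le _)
  have hBs0 : ∀ k, 0 ≤ Bs k := fun k => mul_nonneg (hb0 k) (Real.rpow_nonneg (jp_pos k).le _)
  set P : (Fin d → ℤ) → ℝ := fun k => ∑' k', As k' * b (k - k') with hP
  set Q : (Fin d → ℤ) → ℝ := fun k => ∑' k', Bs k' * a (k - k') with hQ
  have hP_sumd : ∀ k, Summable (fun k' => As k' * b (k - k')) := by
    intro k
    have htr : Summable (fun k' => (b (k - k')) ^ 2) :=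
      summable_translate (f := fun j => b j ^ 2) hb2 k
    exact (tsum_CS hAs0 (fun k' => hb0 _) hAs2 htr).1
  have hQ_sumd : ∀ k, Summable (fun k' => Bs k' * a (k - k')) := by
    intro k
    have htr : Summable (fun k' => (a (k - k')) ^ 2) :=
      summable_translate (f := fun j => a j ^ 2) ha2 k
    exact (tsum_CS hBs0 (fun k' => ha0 _) hBs2 htr).1
  have hP0 : ∀ k, 0 ≤ P k := fun k => tsum_nonneg fun k' => mul_nonneg (hAs0 _) (hb0 _)
  have hQ0 : ∀ k, 0 ≤ Q k := fun k => tsum_nonneg fun k' => mul_nonneg (hBs0 _) (ha0 _)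
  set e1 : ℝ := (1 - θ) ^ (-s) with he1
  have he1' : e1 = ((1 - θ)⁻¹) ^ s := by
    rw [he1, Real.rpow_neg h1θ.le, ← Real.inv_rpow h1θ.le]
  have he1pos : 0 < e1 := Real.rpow_pos_of_pos h1θ _
  have hθinv : θ⁻¹ = (10:ℝ) ^ (1 / (2 * s)) := by
    rw [hθdef, Real.rpow_neg (by norm_num : (0:ℝ) ≤ 10), inv_inv]
  have hθs : (θ⁻¹) ^ s = Real.sqrt 10 := by
    rw [hθinv, ← Real.rpow_mul (by norm_num : (0:ℝ) ≤ 10)]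
    rw [show (1 / (2 * s)) * s = 1/2 by field_simp]
    rw [Real.sqrt_eq_rpow]
  have he2 : 0 < Real.sqrt 10 := Real.sqrt_pos.mpr (by norm_num)
  -- pointwise estimate
  have hsplit : ∀ k, c k * jp k ^ s ≤ e1 * P k + Real.sqrt 10 * Q k := by
    intro k
    have hjs : 0 < jp k ^ s := Real.rpow_pos_of_pos (jp_pos k) s
    have hQeq : Q k = ∑' k', a k' * (b (k - k') * jp (k - k') ^ s) := by
      calc Q k = ∑' k', Bs k' * a (k - k') := rfl
        _ = ∑' k', Bs (k - k') * a (k - (k - k')) :=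
            (Equiv.tsum_eq (Equiv.subLeft k) (fun j => Bs j * a (k - j))).symm
        _ = ∑' k', a k' * (b (k - k') * jp (k - k') ^ s) := by
            apply tsum_congr
            intro k'
            have h1 : k - (k - k') = k' := by abel
            rw [h1, hBs]
            ring
    have hlhs : c k * jp k ^ s = ∑' k', (a k' * b (k - k')) * jp k ^ s := by
      rw [hc, tsum_mul_right]
    rw [hlhs]
    have hrhs_sum2 : Summable (fun k' => a k' * (b (k - k') * jp (k - k') ^ s)) := by
      have htr : Summable (fun k' => (b (k - k') * jp (k - k') ^ s) ^ 2) :=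
        summable_translate (f := fun j => (b j * jp j ^ s) ^ 2) hBs2 k
      exact (tsum_CS ha0 (fun k' => mul_nonneg (hb0 _) (Real.rpow_nonneg (jp_pos _).le _))
        ha2 htr).1
    have hptwise : ∀ k', (a k' * b (k - k')) * jp k ^ s ≤
        e1 * (As k' * b (k - k')) + Real.sqrt 10 * (a k' * (b (k - k') * jp (k - k') ^ s)) := by
      intro k'
      by_cases hcase : θ * jp k ≤ jp (k - k')
      · have h2 : jp k ≤ θ⁻¹ * jp (k - k') := by
          have h5 := mul_le_mul_of_nonneg_left hcase (inv_nonneg.mpr hθpos.le)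
          rwa [inv_mul_cancel_left₀ hθpos.ne'] at h5
        have h3 : jp k ^ s ≤ Real.sqrt 10 * jp (k - k') ^ s := by
          calc jp k ^ s ≤ (θ⁻¹ * jp (k - k')) ^ s :=
                Real.rpow_le_rpow (jp_pos k).le h2 hs0.le
            _ = (θ⁻¹) ^ s * jp (k - k') ^ s :=
                Real.mul_rpow (inv_nonneg.mpr hθpos.le) (jp_pos _).le
            _ = _ := by rw [hθs]
        have h4 : (a k' * b (k - k')) * jp k ^ s ≤
            Real.sqrt 10 * (a k' * (b (k - k') * jp (k - k') ^ s)) := by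
          calc (a k' * b (k - k')) * jp k ^ s
              ≤ (a k' * b (k - k')) * (Real.sqrt 10 * jp (k - k') ^ s) :=
                mul_le_mul_of_nonneg_left h3 (mul_nonneg (ha0 _) (hb0 _))
            _ = _ := by ring
        exact h4.trans (le_add_of_nonneg_left
          (mul_nonneg he1pos.le (mul_nonneg (hAs0 _) (hb0 _))))
      · push_neg at hcase
        have hgeo : (1 - θ) * jp k ≤ jp k' := by
          have h5 := jp_sub_lower hθlt (k := k) (k' := k - k') hcase
          have h6 : k - (k - k') = k' := by abel
          rwa [h6] at h5
        have h2 : jp k ≤ (1 - θ)⁻¹ * jp k' := by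
          have h5 := mul_le_mul_of_nonneg_left hgeo (inv_nonneg.mpr h1θ.le)
          rwa [inv_mul_cancel_left₀ h1θ.ne'] at h5
        have h3 : jp k ^ s ≤ e1 * jp k' ^ s := by
          calc jp k ^ s ≤ ((1 - θ)⁻¹ * jp k') ^ s :=
                Real.rpow_le_rpow (jp_pos k).le h2 hs0.le
            _ = ((1 - θ)⁻¹) ^ s * jp k' ^ s :=
                Real.mul_rpow (inv_nonneg.mpr h1θ.le) (jp_pos _).le
            _ = _ := by rw [he1']
        have h4 : (a k' * b (k - k')) * jp k ^ s ≤ e1 * (As k' * b (k - k')) := by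
          calc (a k' * b (k - k')) * jp k ^ s
              ≤ (a k' * b (k - k')) * (e1 * jp k' ^ s) :=
                mul_le_mul_of_nonneg_left h3 (mul_nonneg (ha0 _) (hb0 _))
            _ = e1 * (As k' * b (k - k')) := by rw [hAs]; ring
        exact h4.trans (le_add_of_nonneg_right (mul_nonneg he2.le
          (mul_nonneg (ha0 _) (mul_nonneg (hb0 _) (Real.rpow_nonneg (jp_pos _).le _)))))
    calc (∑' k', (a k' * b (k - k')) * jp k ^ s)
        ≤ ∑' k', (e1 * (As k' * b (k - k')) +
            Real.sqrt 10 * (a k' * (b (k - k') * jp (k - k') ^ s))) :=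
          Summable.tsum_le_tsum hptwise ((hc_sumd k).mul_right _)
            (((hP_sumd k).mul_left e1).add (hrhs_sum2.mul_left _))
      _ = e1 * (∑' k', As k' * b (k - k')) +
            Real.sqrt 10 * ∑' k', a k' * (b (k - k') * jp (k - k') ^ s) := by
          rw [Summable.tsum_add ((hP_sumd k).mul_left e1) (hrhs_sum2.mul_left _),
            tsum_mul_left, tsum_mul_left]
      _ = e1 * P k + Real.sqrt 10 * Q k := by rw [hQeq]
  -- Young bounds for P and Q
  obtain ⟨hP2, hPb⟩ := young (fun j => hb0 j) hAs0 hb1 hAs2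
  obtain ⟨hQ2, hQb⟩ := young (fun j => ha0 j) hBs0 ha1 hBs2
  -- combine into the final bound
  set u : (Fin d → ℤ) → ℝ := fun k => e1 * P k + Real.sqrt 10 * Q k with hu
  have hu0 : ∀ k, 0 ≤ u k := fun k => add_nonneg (mul_nonneg he1pos.le (hP0 k))
    (mul_nonneg he2.le (hQ0 k))
  have he1P2 : Summable (fun k => (e1 * P k) ^ 2) := by
    refine ((hP2.mul_left (e1 ^ 2)).congr fun k => ?_)
    ring
  have he2Q2 : Summable (fun k => (Real.sqrt 10 * Q k) ^ 2) := by
    refine ((hQ2.mul_left (Real.sqrt 10 ^ 2)).congr fun k => ?_)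
    ring
  obtain ⟨hu2, hub⟩ := tsum_minkowski (fun k => mul_nonneg he1pos.le (hP0 k))
    (fun k => mul_nonneg he2.le (hQ0 k)) he1P2 he2Q2
  -- diagNorm (matMul A B) k * jp k ^ s ≤ u k
  have hdiag_point : ∀ k, diagNorm (matMul A B) k * jp k ^ s ≤ u k := by
    intro k
    have h1 : diagNorm (matMul A B) k * jp k ^ s ≤ c k * jp k ^ s :=
      mul_le_mul_of_nonneg_right (hdiag_le k) (Real.rpow_nonneg (jp_pos k).le _)
    exact h1.trans (hsplit k)
  have hdiag0 : ∀ k, 0 ≤ diagNorm (matMul A B) k * jp k ^ s :=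
    fun k => mul_nonneg (diagNorm_nonneg _ k) (Real.rpow_nonneg (jp_pos k).le _)
  have hAB2 : Summable (fun k => (diagNorm (matMul A B) k * jp k ^ s) ^ 2) :=
    Summable.of_nonneg_of_le (fun k => sq_nonneg _)
      (fun k => pow_le_pow_left₀ (hdiag0 k) (hdiag_point k) 2) hu2
  have hmemS : MemS s (matMul A B) := by
    refine ⟨hBdd, ?_⟩
    exact hAB2.congr fun k => (sq_weight_eq (matMul A B) s k).symm
  refine ⟨hmemS, ?_⟩
  -- final chain
  have hPfin : Real.sqrt (∑' k, P k ^ 2) ≤ SNorm s A * ∑' j, b j := by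
    have := hPb
    rw [snorm_eq A s]
    exact this
  have hQfin : Real.sqrt (∑' k, Q k ^ 2) ≤ SNorm s B * ∑' j, a j := by
    have := hQb
    rw [snorm_eq B s]
    exact this
  have hstep1 : SNorm s (matMul A B) ≤ Real.sqrt (∑' k, u k ^ 2) := by
    rw [snorm_eq]
    apply Real.sqrt_le_sqrt
    exact Summable.tsum_le_tsum (fun k => pow_le_pow_left₀ (hdiag0 k) (hdiag_point k) 2) hAB2 hu2
  have hstep2 : Real.sqrt (∑' k, u k ^ 2) ≤
      e1 * Real.sqrt (∑' k, P k ^ 2) + Real.sqrt 10 * Real.sqrt (∑' k, Q k ^ 2) := by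
    refine hub.trans ?_
    have hc1 : Real.sqrt (∑' k, (e1 * P k) ^ 2) = e1 * Real.sqrt (∑' k, P k ^ 2) := by
      rw [show (fun k => (e1 * P k) ^ 2) = fun k => e1 ^ 2 * P k ^ 2 from funext fun k => by ring]
      rw [tsum_mul_left, Real.sqrt_mul (sq_nonneg e1), Real.sqrt_sq he1pos.le]
    have hc2 : Real.sqrt (∑' k, (Real.sqrt 10 * Q k) ^ 2) =
        Real.sqrt 10 * Real.sqrt (∑' k, Q k ^ 2) := by
      rw [show (fun k => (Real.sqrt 10 * Q k) ^ 2) = fun k => Real.sqrt 10 ^ 2 * Q k ^ 2 from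
        funext fun k => by ring]
      rw [tsum_mul_left, Real.sqrt_mul (sq_nonneg _), Real.sqrt_sq he2.le]
    rw [hc1, hc2]
  have hfinal : SNorm s (matMul A B) ≤
      e1 * (SNorm s A * ∑' j, b j) + Real.sqrt 10 * (SNorm s B * ∑' j, a j) := by
    refine (hstep1.trans hstep2).trans ?_
    apply add_le_add
    · exact mul_le_mul_of_nonneg_left hPfin he1pos.le
    · exact mul_le_mul_of_nonneg_left hQfin he2.le
  refine hfinal.trans ?_
  have hK1 : e1 * Real.sqrt Sw ≤ K1 d α₀ s := by
    rw [K1, ← hθdef, ← he1]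
    apply mul_le_mul_of_nonneg_left _ he1pos.le
    apply Real.sqrt_le_sqrt
    linarith
  have hK0 : Real.sqrt 10 * Real.sqrt Sw ≤ K0 d α₀ := by
    rw [K0, ← hSw, ← Real.sqrt_mul (by norm_num : (0:ℝ) ≤ 10)]
    apply Real.sqrt_le_sqrt
    linarith
  have hbnd1 : e1 * (SNorm s A * ∑' j, b j) ≤ K1 d α₀ s * SNorm s A * SNorm α₀ B := by
    calc e1 * (SNorm s A * ∑' j, b j)
        ≤ e1 * (SNorm s A * (Real.sqrt Sw * SNorm α₀ B)) := by
          apply mul_le_mul_of_nonneg_left _ he1pos.le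
          exact mul_le_mul_of_nonneg_left hb1b (snorm_nonneg A s)
      _ = (e1 * Real.sqrt Sw) * SNorm s A * SNorm α₀ B := by ring
      _ ≤ K1 d α₀ s * SNorm s A * SNorm α₀ B := by
          apply mul_le_mul_of_nonneg_right _ (snorm_nonneg B α₀)
          exact mul_le_mul_of_nonneg_right hK1 (snorm_nonneg A s)
  have hbnd2 : Real.sqrt 10 * (SNorm s B * ∑' j, a j) ≤ K0 d α₀ * SNorm α₀ A * SNorm s B := by
    calc Real.sqrt 10 * (SNorm s B * ∑' j, a j)
        ≤ Real.sqrt 10 * (SNorm s B * (Real.sqrt Sw * SNorm α₀ A)) := by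
          apply mul_le_mul_of_nonneg_left _ he2.le
          exact mul_le_mul_of_nonneg_left ha1b (snorm_nonneg B s)
      _ = (Real.sqrt 10 * Real.sqrt Sw) * SNorm α₀ A * SNorm s B := by ring
      _ ≤ K0 d α₀ * SNorm α₀ A * SNorm s B := by
          apply mul_le_mul_of_nonneg_right _ (snorm_nonneg B s)
          exact mul_le_mul_of_nonneg_right hK0 (snorm_nonneg A α₀)
  linarith

lemma matMul_id {d : ℕ} (X : Mat d) : matMul X idMat = X := by
  funext i j
  rw [matMul]
  rw [tsum_eq_single j]
  · simp [idMat]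
  · intro l hl
    simp [idMat, hl]

lemma prodList_singleton {d : ℕ} (X : Mat d) : prodList [X] = X := by
  rw [prodList, List.foldr_cons, List.foldr_nil, matMul_id]

lemma prodList_cons {d : ℕ} (X : Mat d) (l : List (Mat d)) :
    prodList (X :: l) = matMul X (prodList l) := rfl

def Ssum {d : ℕ} (α₀ s : ℝ) : List (Mat d) → ℝ
  | [] => 0
  | X :: l => SNorm s X * ((l.map (SNorm α₀)).prod) + SNorm α₀ X * Ssum α₀ s l

lemma map_prod_nonneg {d : ℕ} (α₀ : ℝ) (l : List (Mat d)) :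
    0 ≤ ((l.map (SNorm α₀)).prod) := by
  apply List.prod_nonneg
  intro x hx
  obtain ⟨A, _, rfl⟩ := List.mem_map.mp hx
  exact snorm_nonneg A α₀

lemma Ssum_nonneg {d : ℕ} (α₀ s : ℝ) (l : List (Mat d)) : 0 ≤ Ssum α₀ s l := by
  induction l with
  | nil => exact le_refl 0
  | cons X l ih =>
    apply add_nonneg
    · exact mul_nonneg (snorm_nonneg X s) (map_prod_nonneg α₀ l)
    · exact mul_nonneg (snorm_nonneg X α₀) ih

section Constants
variable {d : ℕ} {α₀ s : ℝ}

lemma Sw_ge_one (hα : (d : ℝ) / 2 < α₀) :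
    1 ≤ ∑' k : Fin d → ℤ, (jp k) ^ (-(2 * α₀)) := by
  have hw : Summable (fun k : Fin d → ℤ => jp k ^ (-(2 * α₀))) :=
    summable_jp_rpow (by linarith)
  have h0 : jp (0 : Fin d → ℤ) = 1 := by
    rw [jp, absInf]
    simp
  have := Summable.le_tsum hw 0 (fun k _ => Real.rpow_nonneg (jp_pos k).le _)
  rwa [h0, Real.one_rpow] at this

lemma K0_ge_one (hα : (d : ℝ) / 2 < α₀) : 1 ≤ K0 d α₀ := by
  rw [K0]
  rw [show (1:ℝ) = Real.sqrt 1 from (Real.sqrt_one).symm]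
  apply Real.sqrt_le_sqrt
  nlinarith [Sw_ge_one hα]

lemma K1_ge_one (hα : (d : ℝ) / 2 < α₀) (hs : α₀ ≤ s) : 1 ≤ K1 d α₀ s := by
  have hα0 : 0 < α₀ := lt_of_le_of_lt (by positivity) hα
  have hs0 : 0 < s := lt_of_lt_of_le hα0 hs
  have hθpos : 0 < (10:ℝ) ^ (-(1 / (2 * s))) := Real.rpow_pos_of_pos (by norm_num) _
  have hθlt : (10:ℝ) ^ (-(1 / (2 * s))) < 1 := by
    apply Real.rpow_lt_one_of_one_lt_of_neg (by norm_num)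
    rw [neg_lt, neg_zero]; positivity
  rw [K1]
  have h1 : 1 ≤ (1 - (10:ℝ) ^ (-(1 / (2 * s)))) ^ (-s) := by
    apply Real.one_le_rpow_of_pos_of_le_one_of_nonpos (by linarith) (by linarith)
    linarith
  have h2 : 1 ≤ Real.sqrt (2 * ∑' k : Fin d → ℤ, (jp k) ^ (-(2 * α₀))) := by
    rw [show (1:ℝ) = Real.sqrt 1 from (Real.sqrt_one).symm]
    apply Real.sqrt_le_sqrt
    nlinarith [Sw_ge_one hα]
  nlinarith

lemma K1_nonneg (hα : (d : ℝ) / 2 < α₀) (hs : α₀ ≤ s) : 0 ≤ K1 d α₀ s :=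
  le_trans zero_le_one (K1_ge_one hα hs)

lemma C0_ge_one (hα : (d : ℝ) / 2 < α₀) : 1 ≤ C0 d α₀ := by
  rw [C0]
  have := K1_nonneg hα (le_refl α₀)
  linarith [K0_ge_one hα]

lemma K0_le_C0 (hα : (d : ℝ) / 2 < α₀) : K0 d α₀ ≤ C0 d α₀ := by
  rw [C0]
  linarith [K1_nonneg hα (le_refl α₀)]

end Constants

/-- Iterated tame estimate over lists. -/
lemma prod_bound {d : ℕ} {α₀ s : ℝ} (hα : (d : ℝ) / 2 < α₀) (hs : α₀ ≤ s) :
    ∀ l : List (Mat d), l ≠ [] → (∀ A ∈ l, MemS s A) →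
      MemS s (prodList l) ∧
      SNorm α₀ (prodList l) ≤ C0 d α₀ ^ (l.length - 1) * ((l.map (SNorm α₀)).prod) ∧
      SNorm s (prodList l) ≤ C0 d α₀ ^ l.length * K1 d α₀ s * Ssum α₀ s l := by
  intro l
  induction l with
  | nil => intro h; exact absurd rfl h
  | cons X l ih =>
    intro _ hmem
    have hX : MemS s X := hmem X (List.mem_cons_self)
    have hC1 : 1 ≤ C0 d α₀ := C0_ge_one hα
    have hC0 : (0:ℝ) ≤ C0 d α₀ := le_trans zero_le_one hC1
    have hK1s1 : 1 ≤ K1 d α₀ s := K1_ge_one hα hs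
    have hK1s0 : 0 ≤ K1 d α₀ s := le_trans zero_le_one hK1s1
    by_cases hl : l = []
    · subst hl
      have hps : prodList [X] = X := prodList_singleton X
      rw [hps]
      refine ⟨hX, ?_, ?_⟩
      · simp [Ssum]
      · have h2 : 1 ≤ C0 d α₀ * K1 d α₀ s := by
          calc (1:ℝ) = 1 * 1 := by ring
            _ ≤ C0 d α₀ * K1 d α₀ s := mul_le_mul hC1 hK1s1 zero_le_one hC0
        have h1 : SNorm s X ≤ C0 d α₀ ^ 1 * K1 d α₀ s * SNorm s X := by
          have h3 := snorm_nonneg X s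
          rw [pow_one]
          nlinarith
        simpa [Ssum] using h1
    · have hmem' : ∀ A ∈ l, MemS s A := fun A hA => hmem A (List.mem_cons_of_mem X hA)
      obtain ⟨hP, hPα, hPs⟩ := ih hl hmem'
      have hPαmem : MemS α₀ (prodList l) := memS_mono hs hP
      have hXα : MemS α₀ X := memS_mono hs hX
      obtain ⟨hmem2, hbound⟩ := tame hα hs hX hP
      obtain ⟨_, hboundα⟩ := tame hα (le_refl α₀) hXα hPαmem
      have hm1 : 1 ≤ l.length := List.length_pos_iff.mpr hl
      set C : ℝ := C0 d α₀ with hC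
      set m : ℕ := l.length with hm
      set Pi : ℝ := (l.map (SNorm α₀)).prod with hPi
      have hPi0 : 0 ≤ Pi := map_prod_nonneg α₀ l
      have hS0 : 0 ≤ Ssum α₀ s l := Ssum_nonneg α₀ s l
      have hx0 := snorm_nonneg X s
      have hy0 := snorm_nonneg X α₀
      have hp0 := snorm_nonneg (prodList l) α₀
      have hq0 := snorm_nonneg (prodList l) s
      have hmm : m - 1 + 1 = m := Nat.succ_pred_eq_of_pos hm1
      have hpow1 : C ^ (m - 1) ≤ C ^ (m + 1) := pow_le_pow_right₀ hC1 (by omega)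
      have hpow0 : (0:ℝ) ≤ C ^ m := pow_nonneg hC0 m
      refine ⟨hmem2, ?_, ?_⟩
      · -- α₀ bound
        have hcons_len : (X :: l).length - 1 = m := by simp [hm]
        have hcons_prod : ((X :: l).map (SNorm α₀)).prod = SNorm α₀ X * Pi := by
          rw [List.map_cons, List.prod_cons]
        rw [prodList_cons, hcons_len, hcons_prod]
        calc SNorm α₀ (matMul X (prodList l))
            ≤ K1 d α₀ α₀ * SNorm α₀ X * SNorm α₀ (prodList l) +
              K0 d α₀ * SNorm α₀ X * SNorm α₀ (prodList l) := hboundα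
          _ = C * (SNorm α₀ X * SNorm α₀ (prodList l)) := by rw [hC, C0]; ring
          _ ≤ C * (SNorm α₀ X * (C ^ (m - 1) * Pi)) := by
              apply mul_le_mul_of_nonneg_left _ hC0
              exact mul_le_mul_of_nonneg_left hPα hy0
          _ = C ^ (m - 1 + 1) * (SNorm α₀ X * Pi) := by rw [pow_succ]; ring
          _ = C ^ m * (SNorm α₀ X * Pi) := by rw [hmm]
      · -- s bound
        have hcons_len : (X :: l).length = m + 1 := by simp [hm]
        have hSsum : Ssum α₀ s (X :: l) = SNorm s X * Pi + SNorm α₀ X * Ssum α₀ s l := rfl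
        rw [prodList_cons, hcons_len, hSsum]
        have e1 : K1 d α₀ s * SNorm s X * SNorm α₀ (prodList l) ≤
            C ^ (m + 1) * (K1 d α₀ s * (SNorm s X * Pi)) := by
          calc K1 d α₀ s * SNorm s X * SNorm α₀ (prodList l)
              ≤ K1 d α₀ s * SNorm s X * (C ^ (m - 1) * Pi) := by
                apply mul_le_mul_of_nonneg_left hPα (mul_nonneg hK1s0 hx0)
            _ = C ^ (m - 1) * (K1 d α₀ s * (SNorm s X * Pi)) := by ring
            _ ≤ C ^ (m + 1) * (K1 d α₀ s * (SNorm s X * Pi)) := by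
                apply mul_le_mul_of_nonneg_right hpow1
                exact mul_nonneg hK1s0 (mul_nonneg hx0 hPi0)
        have e2 : K0 d α₀ * SNorm α₀ X * SNorm s (prodList l) ≤
            C ^ (m + 1) * (K1 d α₀ s * (SNorm α₀ X * Ssum α₀ s l)) := by
          have hK0C : K0 d α₀ * C ^ m ≤ C ^ (m + 1) := by
            rw [pow_succ]
            calc K0 d α₀ * C ^ m ≤ C * C ^ m :=
                  mul_le_mul_of_nonneg_right (K0_le_C0 hα) hpow0
              _ = C ^ m * C := by ring
          calc K0 d α₀ * SNorm α₀ X * SNorm s (prodList l)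
              ≤ K0 d α₀ * SNorm α₀ X * (C ^ m * K1 d α₀ s * Ssum α₀ s l) := by
                apply mul_le_mul_of_nonneg_left hPs
                  (mul_nonneg (le_trans zero_le_one (K0_ge_one hα)) hy0)
            _ = (K0 d α₀ * C ^ m) * (K1 d α₀ s * (SNorm α₀ X * Ssum α₀ s l)) := by ring
            _ ≤ C ^ (m + 1) * (K1 d α₀ s * (SNorm α₀ X * Ssum α₀ s l)) := by
                apply mul_le_mul_of_nonneg_right hK0C
                exact mul_nonneg hK1s0 (mul_nonneg hy0 hS0)
        calc SNorm s (matMul X (prodList l))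
            ≤ K1 d α₀ s * SNorm s X * SNorm α₀ (prodList l) +
              K0 d α₀ * SNorm α₀ X * SNorm s (prodList l) := hbound
          _ ≤ C ^ (m + 1) * (K1 d α₀ s * (SNorm s X * Pi)) +
              C ^ (m + 1) * (K1 d α₀ s * (SNorm α₀ X * Ssum α₀ s l)) := add_le_add e1 e2
          _ = C ^ (m + 1) * K1 d α₀ s *
              (SNorm s X * Pi + SNorm α₀ X * Ssum α₀ s l) := by ring

lemma prod_erase_eq_ite {n : ℕ} (g : Fin n → ℝ) (i : Fin n) :
    (∏ j ∈ Finset.univ.erase i, g j) = ∏ j, (if j = i then 1 else g j) := by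
  rw [← Finset.mul_prod_erase Finset.univ (fun j => if j = i then 1 else g j)
    (Finset.mem_univ i), if_pos rfl, one_mul]
  exact (Finset.prod_congr rfl fun x hx => if_neg (Finset.ne_of_mem_erase hx)).symm

lemma Ssum_ofFn {d : ℕ} (α₀ s : ℝ) : ∀ (n : ℕ) (X : Fin n → Mat d),
    Ssum α₀ s (List.ofFn X) =
      ∑ i, (∏ j ∈ Finset.univ.erase i, SNorm α₀ (X j)) * SNorm s (X i) := by
  intro n
  induction n with
  | zero => intro X; simp [Ssum]
  | succ n ih =>
    intro X
    rw [List.ofFn_succ]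
    have hmap : ((List.ofFn (fun i : Fin n => X i.succ)).map (SNorm α₀)).prod =
        ∏ j : Fin n, SNorm α₀ (X j.succ) := by
      rw [List.map_ofFn, List.prod_ofFn]
      rfl
    have hSs : Ssum α₀ s (X 0 :: List.ofFn fun i : Fin n => X i.succ) =
        SNorm s (X 0) * ((List.ofFn (fun i : Fin n => X i.succ)).map (SNorm α₀)).prod +
        SNorm α₀ (X 0) * Ssum α₀ s (List.ofFn fun i : Fin n => X i.succ) := rfl
    rw [hSs, hmap, ih]
    -- now compute the RHS
    rw [Fin.sum_univ_succ]
    have ha : (∏ j ∈ Finset.univ.erase (0 : Fin (n+1)), SNorm α₀ (X j)) =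
        ∏ j : Fin n, SNorm α₀ (X j.succ) := by
      rw [prod_erase_eq_ite, Fin.prod_univ_succ, if_pos rfl, one_mul]
      exact Finset.prod_congr rfl fun j _ => if_neg (Fin.succ_ne_zero j)
    have hb : ∀ i : Fin n, (∏ j ∈ Finset.univ.erase i.succ, SNorm α₀ (X j)) =
        SNorm α₀ (X 0) * ∏ j ∈ Finset.univ.erase i, SNorm α₀ (X j.succ) := by
      intro i
      rw [prod_erase_eq_ite, Fin.prod_univ_succ, if_neg (Fin.succ_ne_zero i).symm]
      congr 1
      rw [prod_erase_eq_ite]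
      exact Finset.prod_congr rfl fun j _ => by
        by_cases h : j = i
        · subst h; rw [if_pos rfl, if_pos rfl]
        · rw [if_neg (fun hc => h (Fin.succ_injective n hc)), if_neg h]
    rw [ha]
    have hc : ∑ i : Fin n, (∏ j ∈ Finset.univ.erase i.succ, SNorm α₀ (X j)) *
        SNorm s (X i.succ) = SNorm α₀ (X 0) *
        ∑ i : Fin n, (∏ j ∈ Finset.univ.erase i, SNorm α₀ (X j.succ)) * SNorm s (X i.succ) := by
      rw [Finset.mul_sum]
      exact Finset.sum_congr rfl fun i _ => by rw [hb i]; ring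
    rw [hc]
    ring

theorem stmt5 (d : ℕ) (α₀ s : ℝ) (hα : α₀ > (d : ℝ) / 2) (hs : s ≥ α₀)
    (n : ℕ) (hn : 1 ≤ n) (X : Fin n → Mat d) (hX : ∀ i, MemS s (X i)) :
    SNorm s (prodList (List.ofFn X)) ≤
      (n : ℝ) * (C0 d α₀) ^ n * K1 d α₀ s *
        ∑ i : Fin n, (∏ j ∈ Finset.univ.erase i, SNorm α₀ (X j)) * SNorm s (X i) := by
  have hne : List.ofFn X ≠ [] := by
    simp only [ne_eq, List.ofFn_eq_nil_iff]
    omega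
  have hmem : ∀ A ∈ List.ofFn X, MemS s A := by
    intro A hA
    obtain ⟨i, rfl⟩ := List.mem_ofFn.mp hA
    exact hX i
  obtain ⟨_, _, h3⟩ := prod_bound hα hs (List.ofFn X) hne hmem
  rw [List.length_ofFn, Ssum_ofFn] at h3
  set S : ℝ := ∑ i, (∏ j ∈ Finset.univ.erase i, SNorm α₀ (X j)) * SNorm s (X i) with hS
  have hS0 : 0 ≤ S := by
    apply Finset.sum_nonneg
    intro i _
    apply mul_nonneg _ (snorm_nonneg _ s)
    apply Finset.prod_nonneg
    intro j _
    exact snorm_nonneg _ α₀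
  have hC0 : (0:ℝ) ≤ C0 d α₀ ^ n := pow_nonneg (le_trans zero_le_one (C0_ge_one hα)) n
  have hK10 : 0 ≤ K1 d α₀ s := K1_nonneg hα hs
  have hn1 : (1:ℝ) ≤ (n:ℝ) := by exact_mod_cast hn
  calc SNorm s (prodList (List.ofFn X)) ≤ C0 d α₀ ^ n * K1 d α₀ s * S := h3
    _ ≤ (n : ℝ) * (C0 d α₀ ^ n * K1 d α₀ s * S) := by
        apply le_mul_of_one_le_left _ hn1
        exact mul_nonneg (mul_nonneg hC0 hK10) hS0
    _ = (n : ℝ) * C0 d α₀ ^ n * K1 d α₀ s * S := by ring
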